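/- arXiv:2209.11474 — 3 statements merged into one kernel-verified Lean document; each statement's English description precedes it below -/
import Mathlib

section
/- Let c ∈ ℝ^L with L ≥ 2 and μ > 0, and let i₊ be an index attaining max_i c_i and i₋ an index attaining min_i c_i, with c_{i₊} ≠ c_{i₋}. Then the bipolar pattern y* ∈ ℝ^L defined by y*_{i₊} = μ/2, y*_{i₋} = −μ/2, and y*_i = 0 otherwise, satisfies ∑_i y*_i = 0 and ‖y*‖₁ = μ, and achieves cᵀy* = (μ/2)·(max_i c_i − min_i c_i); in particular y* maximizes cᵀy over all y with ∑_i y_i = 0 and ‖y‖₁ ≤ μ. -/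
/-- The bipolar pattern placing `μ/2` at an index attaining `max_i c_i` and `−μ/2` at an
index attaining `min_i c_i` (with distinct extreme values) is feasible, uses the full dose,
attains `cᵀy* = (μ/2)(max_i c_i − min_i c_i)`, and maximizes `cᵀy` over all zero-sum
patterns with `‖y‖₁ ≤ μ`. -/
theorem stmt_1 (L : ℕ) (hL : 2 ≤ L) (c : Fin L → ℝ) (μ : ℝ) (hμ : 0 < μ)
    (ip im : Fin L) (hmax : ∀ i, c i ≤ c ip) (hmin : ∀ i, c im ≤ c i)
    (hne : c ip ≠ c im)
    (ystar : Fin L → ℝ)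
    (hystar : ystar = fun i => (if i = ip then μ / 2 else 0) + (if i = im then -(μ / 2) else 0)) :
    (∑ i, ystar i = 0) ∧ (∑ i, |ystar i| = μ) ∧
      (∑ i, c i * ystar i = μ / 2 * (c ip - c im)) ∧
      (∀ y : Fin L → ℝ, (∑ i, y i = 0) → (∑ i, |y i| ≤ μ) →
        ∑ i, c i * y i ≤ ∑ i, c i * ystar i) := by
  subst hystar
  have hne' : ip ≠ im := fun h => hne (by rw [h])
  have h1 : (∑ i, ((if i = ip then μ / 2 else 0) + (if i = im then -(μ / 2) else 0))) = 0 := by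
    rw [Finset.sum_add_distrib, Finset.sum_ite_eq', Finset.sum_ite_eq']
    simp
  have h2 : (∑ i, |((if i = ip then μ / 2 else 0) + (if i = im then -(μ / 2) else 0))|) = μ := by
    have : ∀ i : Fin L, |((if i = ip then μ / 2 else 0) + (if i = im then -(μ / 2) else 0))|
        = (if i = ip then μ / 2 else 0) + (if i = im then μ / 2 else 0) := by
      intro i
      by_cases hi : i = ip
      · subst hi
        simp [hne', abs_of_pos (by linarith : (0:ℝ) < μ / 2)]
      · by_cases hi' : i = im
        · subst hi'
          simp [hi, abs_of_neg (by linarith : -(μ / 2) < (0:ℝ))]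
        · simp [hi, hi']
    rw [Finset.sum_congr rfl (fun i _ => this i), Finset.sum_add_distrib,
      Finset.sum_ite_eq', Finset.sum_ite_eq']
    simp
  have h3 : (∑ i, c i * ((if i = ip then μ / 2 else 0) + (if i = im then -(μ / 2) else 0)))
      = μ / 2 * (c ip - c im) := by
    have : ∀ i : Fin L, c i * ((if i = ip then μ / 2 else 0) + (if i = im then -(μ / 2) else 0))
        = (if i = ip then c i * (μ / 2) else 0) + (if i = im then c i * (-(μ / 2)) else 0) := by
      intro i
      rcases eq_or_ne i ip with hi | hi
      · subst hi; simp [hne', mul_add]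
      · rcases eq_or_ne i im with hi' | hi'
        · subst hi'; simp [hi, mul_add]
        · simp [hi, hi']
    rw [Finset.sum_congr rfl (fun i _ => this i), Finset.sum_add_distrib,
      Finset.sum_ite_eq', Finset.sum_ite_eq']
    simp; ring
  refine ⟨h1, h2, h3, ?_⟩
  intro y hy0 hy1
  rw [h3]
  set m : ℝ := (c ip + c im) / 2 with hm
  have key : (∑ i, c i * y i) = ∑ i, (c i - m) * y i := by
    simp [sub_mul, Finset.sum_sub_distrib, ← Finset.mul_sum, hy0]
  rw [key]
  have hbd : ∀ i ∈ Finset.univ, (c i - m) * y i ≤ (c ip - c im) / 2 * |y i| := by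
    intro i _
    calc (c i - m) * y i ≤ |(c i - m) * y i| := le_abs_self _
      _ = |c i - m| * |y i| := abs_mul _ _
      _ ≤ (c ip - c im) / 2 * |y i| := by
          apply mul_le_mul_of_nonneg_right _ (abs_nonneg _)
          rw [abs_le]
          constructor <;> [have := hmin i; have := hmax i] <;> simp [hm] <;> linarith
  calc (∑ i, (c i - m) * y i) ≤ ∑ i, (c ip - c im) / 2 * |y i| := Finset.sum_le_sum hbd
    _ = (c ip - c im) / 2 * ∑ i, |y i| := by rw [Finset.mul_sum]
    _ ≤ (c ip - c im) / 2 * μ := by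
        apply mul_le_mul_of_nonneg_left hy1
        have := hmax im; linarith
    _ = μ / 2 * (c ip - c im) := by ring
end

section
/- Generalized reciprocity principle for the tES lead field matrix: let L₁ be a real M × L matrix, let x₁ ∈ ℝ^M with x₁ ≠ 0, let μ > 0, and define the intensity of a current pattern y ∈ ℝ^L by Γ(y) = x₁ᵀL₁y / ‖x₁‖₂. Then the supremum of Γ(y) over all y with ∑_{i=1}^L y_i = 0 and ‖y‖₁ ≤ μ equals μ·(max_i (L₁ᵀx₁)_i − min_i (L₁ᵀx₁)_i) / (2‖x₁‖₂), and it is attained by the bipolar pattern placing μ/2 at an index maximizing (L₁ᵀx₁)_i and −μ/2 at an index minimizing (L₁ᵀx₁)_i. -/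
/-- Generalized reciprocity principle: the supremum of the intensity
`Γ(y) = x₁ᵀL₁y / ‖x₁‖₂` over zero-sum patterns with `‖y‖₁ ≤ μ` equals
`μ·(max_i (L₁ᵀx₁)_i − min_i (L₁ᵀx₁)_i)/(2‖x₁‖₂)`, and it is attained (so the
supremum is a maximum) by the bipolar pattern placing `μ/2` at any index maximizing
`(L₁ᵀx₁)_i` and `−μ/2` at any index minimizing it. -/
theorem stmt_2 (M L : ℕ) (hL : 0 < L)
    (L₁ : Matrix (Fin M) (Fin L) ℝ) (x₁ : Fin M → ℝ) (hx : x₁ ≠ 0)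
    (μ : ℝ) (hμ : 0 < μ)
    (c : Fin L → ℝ) (hc : c = fun i => ∑ m, L₁ m i * x₁ m)
    (nx : ℝ) (hnx : nx = Real.sqrt (∑ m, (x₁ m) ^ 2))
    (Γ : (Fin L → ℝ) → ℝ)
    (hΓ : Γ = fun y => (∑ m, x₁ m * (∑ i, L₁ m i * y i)) / nx) :
    IsGreatest
        {g : ℝ | ∃ y : Fin L → ℝ, (∑ i, y i = 0) ∧ (∑ i, |y i| ≤ μ) ∧ g = Γ y}
        (μ *
            (Finset.univ.sup' (Finset.univ_nonempty_iff.mpr (Fin.pos_iff_nonempty.mp hL)) c -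
              Finset.univ.inf' (Finset.univ_nonempty_iff.mpr (Fin.pos_iff_nonempty.mp hL)) c) /
          (2 * nx)) ∧
      ∀ ip im : Fin L, (∀ i, c i ≤ c ip) → (∀ i, c im ≤ c i) →
        Γ (fun i => (if i = ip then μ / 2 else 0) + (if i = im then -(μ / 2) else 0)) =
          μ *
              (Finset.univ.sup' (Finset.univ_nonempty_iff.mpr (Fin.pos_iff_nonempty.mp hL)) c -
                Finset.univ.inf' (Finset.univ_nonempty_iff.mpr (Fin.pos_iff_nonempty.mp hL)) c) /
            (2 * nx) := by
  have hne : (Finset.univ : Finset (Fin L)).Nonempty :=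
    Finset.univ_nonempty_iff.mpr (Fin.pos_iff_nonempty.mp hL)
  -- nx > 0
  have hnx0 : 0 < nx := by
    rw [hnx]
    apply Real.sqrt_pos.mpr
    rcases Function.ne_iff.mp hx with ⟨m, hm⟩
    have h2 : 0 < (x₁ m) ^ 2 := pow_two_pos_of_ne_zero hm
    calc (0:ℝ) < (x₁ m)^2 := h2
      _ ≤ ∑ m, (x₁ m)^2 :=
        Finset.single_le_sum (f := fun i => (x₁ i)^2) (fun i _ => by positivity)
          (Finset.mem_univ m)
  -- Γ in terms of c
  have hΓc : ∀ y : Fin L → ℝ, Γ y = (∑ i, c i * y i) / nx := by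
    intro y
    have h1 : (∑ m, x₁ m * (∑ i, L₁ m i * y i)) = ∑ i, c i * y i := by
      rw [hc]
      simp only [Finset.mul_sum, Finset.sum_mul]
      rw [Finset.sum_comm]
      exact Finset.sum_congr rfl fun i _ => Finset.sum_congr rfl fun m _ => by ring
    rw [hΓ]
    simp only
    rw [h1]
  set S := Finset.univ.sup' hne c with hS
  set I := Finset.univ.inf' hne c with hI
  have hcS : ∀ i, c i ≤ S := fun i => Finset.le_sup' c (Finset.mem_univ i)
  have hIc : ∀ i, I ≤ c i := fun i => Finset.inf'_le c (Finset.mem_univ i)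
  have key : ∀ ip im : Fin L,
      Γ (fun i => (if i = ip then μ / 2 else 0) + (if i = im then -(μ / 2) else 0)) =
        μ * (c ip - c im) / (2 * nx) := by
    intro ip im
    rw [hΓc]
    have : (∑ i, c i * ((if i = ip then μ / 2 else 0) + (if i = im then -(μ / 2) else 0)))
        = μ/2 * c ip - μ/2 * c im := by
      simp only [mul_add, Finset.sum_add_distrib, mul_ite, mul_zero, mul_neg]
      rw [Finset.sum_ite_eq' Finset.univ ip (fun i => c i * (μ/2)),
          Finset.sum_ite_eq' Finset.univ im (fun i => -(c i * (μ/2)))]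
      simp only [Finset.mem_univ, if_true]
      ring
    rw [this]; ring
  constructor
  · constructor
    · -- membership: pick maximizer and minimizer
      obtain ⟨ip, _, hip⟩ := Finset.exists_mem_eq_sup' hne c
      obtain ⟨im, _, him⟩ := Finset.exists_mem_eq_inf' hne c
      refine ⟨fun i => (if i = ip then μ / 2 else 0) + (if i = im then -(μ / 2) else 0), ?_, ?_, ?_⟩
      · simp [Finset.sum_add_distrib, Finset.sum_ite_eq' Finset.univ]
      · have hptw : ∀ i : Fin L, |(if i = ip then μ / 2 else 0) + (if i = im then -(μ / 2) else 0)|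
            ≤ (if i = ip then μ / 2 else 0) + (if i = im then μ / 2 else 0) := by
          intro i
          have hμ2 : (0:ℝ) ≤ μ / 2 := by linarith
          refine (abs_add_le _ _).trans (add_le_add ?_ ?_)
          · rcases eq_or_ne i ip with h | h <;> simp [h, abs_of_nonneg hμ2]
          · rcases eq_or_ne i im with h | h <;> simp [h, abs_of_nonneg hμ2]
        calc ∑ i, |(if i = ip then μ / 2 else 0) + (if i = im then -(μ / 2) else 0)|
            ≤ ∑ i, ((if i = ip then μ / 2 else 0) + (if i = im then μ / 2 else 0)) :=
              Finset.sum_le_sum fun i _ => hptw i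
          _ = μ := by
            simp only [Finset.sum_add_distrib, Finset.sum_ite_eq' Finset.univ,
              Finset.mem_univ, if_true]
            ring
      · rw [key ip im, ← hip, ← him]
    · -- upper bound
      rintro g ⟨y, hsum, habs, rfl⟩
      rw [hΓc]
      rw [div_le_div_iff₀ hnx0 (by positivity)]
      have hIS : I ≤ S := (hIc ⟨0, hL⟩).trans (hcS ⟨0, hL⟩)
      have step : (∑ i, c i * y i) = ∑ i, (c i - (S + I)/2) * y i := by
        simp only [sub_mul, Finset.sum_sub_distrib, ← Finset.mul_sum, hsum]
        ring_nf
      have bound : (∑ i, (c i - (S + I)/2) * y i) ≤ (S - I)/2 * ∑ i, |y i| := by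
        rw [Finset.mul_sum]
        refine Finset.sum_le_sum fun i _ => ?_
        calc (c i - (S + I)/2) * y i ≤ |(c i - (S + I)/2) * y i| := le_abs_self _
          _ = |c i - (S + I)/2| * |y i| := abs_mul _ _
          _ ≤ (S - I)/2 * |y i| := by
              gcongr
              rw [abs_le]
              constructor <;> [linarith [hIc i]; linarith [hcS i]]
      calc (∑ i, c i * y i) * (2 * nx) = (∑ i, (c i - (S + I)/2) * y i) * (2 * nx) := by
            rw [step]
        _ ≤ ((S - I)/2 * ∑ i, |y i|) * (2 * nx) :=
            mul_le_mul_of_nonneg_right bound (by positivity)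
        _ ≤ ((S - I)/2 * μ) * (2 * nx) :=
            mul_le_mul_of_nonneg_right
              (mul_le_mul_of_nonneg_left habs (by linarith)) (by positivity)
        _ = μ * (S - I) * nx := by ring
  · intro ip im hip him
    have hSp : S = c ip := le_antisymm (Finset.sup'_le hne c fun i _ => hip i)
      (Finset.le_sup' c (Finset.mem_univ ip))
    have hIm : I = c im := le_antisymm (Finset.inf'_le c (Finset.mem_univ im))
      (Finset.le_inf' hne c fun i _ => him i)
    rw [key ip im, hSp, hIm]
end

section
/- Let c ∈ ℝ^L with L ≥ 2, and let i₁, i₂ be distinct indices carrying the two greatest absolute values of c, i.e. |c_{i₁}| ≥ |c_{i₂}| ≥ |c_j| for all j ∉ {i₁, i₂}. If c_{i₁} > 0 > c_{i₂}, then max_i c_i = c_{i₁} and min_i c_i = c_{i₂}; consequently, for any μ > 0 the bipolar pattern with μ/2 at i₁ and −μ/2 at i₂ maximizes cᵀy over {y ∈ ℝ^L : ∑_i y_i = 0, ‖y‖₁ ≤ μ}, with maximum value (μ/2)(|c_{i₁}| + |c_{i₂}|). -/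
/-- If `i₁, i₂` carry the two greatest absolute values of `c` and `c_{i₁} > 0 > c_{i₂}`,
then `c_{i₁}` is the maximum and `c_{i₂}` the minimum of `c`; consequently the bipolar
pattern with `μ/2` at `i₁` and `−μ/2` at `i₂` is feasible and maximizes `cᵀy` over
zero-sum patterns with `‖y‖₁ ≤ μ`, with maximum value `(μ/2)(|c_{i₁}| + |c_{i₂}|)`. -/
theorem stmt_3 (L : ℕ) (hL : 2 ≤ L) (c : Fin L → ℝ) (i₁ i₂ : Fin L) (hne : i₁ ≠ i₂)
    (h12 : |c i₂| ≤ |c i₁|) (htop : ∀ j, j ≠ i₁ → j ≠ i₂ → |c j| ≤ |c i₂|)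
    (hsign : c i₂ < 0 ∧ 0 < c i₁) :
    (∀ i, c i ≤ c i₁) ∧ (∀ i, c i₂ ≤ c i) ∧
      ∀ μ : ℝ, 0 < μ →
        ∀ ystar : Fin L → ℝ,
          ystar = (fun i => (if i = i₁ then μ / 2 else 0) + (if i = i₂ then -(μ / 2) else 0)) →
            (∑ i, ystar i = 0) ∧ (∑ i, |ystar i| ≤ μ) ∧
              (∀ y : Fin L → ℝ, (∑ i, y i = 0) → (∑ i, |y i| ≤ μ) →
                ∑ i, c i * y i ≤ ∑ i, c i * ystar i) ∧
              (∑ i, c i * ystar i = μ / 2 * (|c i₁| + |c i₂|)) := by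
  obtain ⟨hneg, hpos⟩ := hsign
  have habs1 : |c i₁| = c i₁ := abs_of_pos hpos
  have habs2 : |c i₂| = -(c i₂) := abs_of_neg hneg
  have hM : ∀ i, c i ≤ c i₁ := by
    intro i
    by_cases h1 : i = i₁
    · simp [h1]
    by_cases h2 : i = i₂
    · subst h2; linarith
    have := htop i h1 h2
    have h3 : c i ≤ |c i| := le_abs_self _
    linarith
  have hm : ∀ i, c i₂ ≤ c i := by
    intro i
    by_cases h1 : i = i₁
    · subst h1; linarith
    by_cases h2 : i = i₂
    · simp [h2]
    have := htop i h1 h2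
    have h3 : -(c i) ≤ |c i| := neg_le_abs _
    linarith
  refine ⟨hM, hm, ?_⟩
  intro μ hμ ystar hy
  subst hy
  have hs1 : (∑ i, ((if i = i₁ then μ / 2 else 0) + (if i = i₂ then -(μ / 2) else 0))) = 0 := by
    rw [Finset.sum_add_distrib]
    simp [Finset.sum_ite_eq']
  have hval : (∑ i, c i * ((if i = i₁ then μ / 2 else 0) + (if i = i₂ then -(μ / 2) else 0)))
      = μ / 2 * (c i₁ - c i₂) := by
    rw [Finset.sum_congr rfl (fun i _ => mul_add (c i) _ _), Finset.sum_add_distrib]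
    simp [mul_ite, Finset.sum_ite_eq']
    ring
  refine ⟨hs1, ?_, ?_, ?_⟩
  · have : ∀ i : Fin L, |((if i = i₁ then μ / 2 else 0) + (if i = i₂ then -(μ / 2) else 0))|
        = (if i = i₁ then μ / 2 else 0) + (if i = i₂ then μ / 2 else 0) := by
      intro i
      by_cases h1 : i = i₁
      · have h2 : i ≠ i₂ := h1 ▸ hne
        simp [h1, h2, hne, hne.symm, abs_of_nonneg (by linarith : (0:ℝ) ≤ μ / 2)]
      by_cases h2 : i = i₂
      · simp [h1, h2, hne, hne.symm, abs_of_nonpos (by linarith : -(μ / 2) ≤ (0:ℝ))]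
      · simp [h1, h2]
    rw [Finset.sum_congr rfl (fun i _ => this i), Finset.sum_add_distrib]
    simp [Finset.sum_ite_eq']
  · intro y hy0 hy1
    rw [hval]
    have key : ∀ i, c i * y i ≤ c i₁ * max (y i) 0 - c i₂ * max (-(y i)) 0 := by
      intro i
      rcases le_or_gt 0 (y i) with h | h
      · rw [max_eq_left h, max_eq_right (by linarith)]
        have := hM i
        nlinarith
      · rw [max_eq_right (le_of_lt h), max_eq_left (by linarith)]
        have := hm i
        nlinarith
    have hsum : ∑ i, c i * y i ≤ c i₁ * (∑ i, max (y i) 0) - c i₂ * (∑ i, max (-(y i)) 0) := by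
      rw [Finset.mul_sum, Finset.mul_sum, ← Finset.sum_sub_distrib]
      exact Finset.sum_le_sum fun i _ => key i
    have hPN : (∑ i, max (y i) 0) - (∑ i, max (-(y i)) 0) = 0 := by
      have h := Finset.sum_congr (rfl : (Finset.univ : Finset (Fin L)) = Finset.univ)
        (fun i _ => max_zero_sub_max_neg_zero_eq_self (y i))
      rw [← Finset.sum_sub_distrib, h, hy0]
    have hPN2 : (∑ i, max (y i) 0) + (∑ i, max (-(y i)) 0) ≤ μ := by
      rw [← Finset.sum_add_distrib]
      refine le_trans (le_of_eq (Finset.sum_congr rfl fun i _ => ?_)) hy1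
      rcases le_or_gt 0 (y i) with h | h
      · rw [max_eq_left h, max_eq_right (by linarith), abs_of_nonneg h]; ring
      · rw [max_eq_right (le_of_lt h), max_eq_left (by linarith), abs_of_neg h]; ring
    have hP : (∑ i, max (y i) 0) ≤ μ / 2 := by linarith
    have hPnn : 0 ≤ (∑ i, max (y i) 0) := Finset.sum_nonneg fun i _ => le_max_right _ _
    nlinarith
  · rw [hval, habs1, habs2]; ring
end
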